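/- Let H be a bialgebra over a commutative ring k, R ∈ H ⊗ H an invertible element satisfying (id ⊗ Δ)(R) = R₁₃R₁₂ and (Δ̃ ⊗ id)(R) = R₂₃R₁₃, where Δ̃: H → H ⊗ H is a k-linear algebra map with (ε ⊗ id)∘Δ̃ = id = (id ⊗ ε)∘Δ̃, and suppose Δ̃(h)·R = R·Δ(h) for all h ∈ H. Then Δ̃ is coassociative: (Δ̃ ⊗ id)∘Δ̃ = (id ⊗ Δ̃)∘Δ̃. -/

import Mathlib

open TensorProduct

variable (k : Type*) [CommRing k] (H : Type*) [Ring H] [Bialgebra k H]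

/-- `R ⊗ 1` in `H ⊗ H ⊗ H`. -/
noncomputable def leg12 : H ⊗[k] H →ₐ[k] H ⊗[k] (H ⊗[k] H) :=
  Algebra.TensorProduct.map (AlgHom.id k H) Algebra.TensorProduct.includeLeft

/-- `R` with legs in factors 1 and 3. -/
noncomputable def leg13 : H ⊗[k] H →ₐ[k] H ⊗[k] (H ⊗[k] H) :=
  Algebra.TensorProduct.map (AlgHom.id k H) Algebra.TensorProduct.includeRight

/-- `1 ⊗ R` in `H ⊗ H ⊗ H`. -/
noncomputable def leg23 : H ⊗[k] H →ₐ[k] H ⊗[k] (H ⊗[k] H) :=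
  Algebra.TensorProduct.includeRight

/-- `id ⊗ Δ`. -/
noncomputable def idComul : H ⊗[k] H →ₐ[k] H ⊗[k] (H ⊗[k] H) :=
  Algebra.TensorProduct.map (AlgHom.id k H) (Bialgebra.comulAlgHom k H)

/-- `Δ ⊗ id` (landing in `H ⊗ (H ⊗ H)` via the associator). -/
noncomputable def comulId : H ⊗[k] H →ₐ[k] H ⊗[k] (H ⊗[k] H) :=
  (Algebra.TensorProduct.assoc k k k H H H).toAlgHom.comp
    (Algebra.TensorProduct.map (Bialgebra.comulAlgHom k H) (AlgHom.id k H))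

/-- The opposite comultiplication `Δᵒᵖ = τ ∘ Δ`. -/
noncomputable def comulOp : H →ₐ[k] H ⊗[k] H :=
  (Algebra.TensorProduct.comm k H H).toAlgHom.comp (Bialgebra.comulAlgHom k H)

/-! Let `T = R₂₃ R₁₃ R₁₂`. Lifting `Δ̃ h * R = R * Δ h` to three tensor factors shows that
`X = (Δ̃ ⊗ id) (Δ̃ h)` and `X = (id ⊗ Δ̃) (Δ̃ h)` both satisfy `X * T = T * (Δ ⊗ id) (Δ h)`:
on the left `T` arises as `(Δ̃ ⊗ id) R * R₁₂`, on the right as `R₂₃ * (id ⊗ Δ) R`, and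
`(Δ ⊗ id) ∘ Δ = (id ⊗ Δ) ∘ Δ`. Each leg of `R` has a right inverse, so `T` cancels on the right. -/

namespace Algebra.TensorProduct

variable {R A B C : Type*} [CommSemiring R] [Semiring A] [Semiring B] [Semiring C]
  [Algebra R A] [Algebra R B] [Algebra R C]

theorem semiconjBy_tmul_one_map {f g : A →ₐ[R] B} {r : B} (hfg : ∀ a, SemiconjBy r (g a) (f a))
    (x : A ⊗[R] C) :
    SemiconjBy (r ⊗ₜ (1 : C)) (map g (AlgHom.id R C) x) (map f (AlgHom.id R C) x) := by
  induction x using TensorProduct.induction_on with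
  | zero => simpa only [map_zero] using SemiconjBy.zero_right _
  | tmul a c => simp only [map_tmul, AlgHom.id_apply, SemiconjBy, tmul_mul_tmul, (hfg a).eq,
      one_mul, mul_one]
  | add x y hx hy => simpa only [map_add] using hx.add_right hy

theorem semiconjBy_one_tmul_map {f g : A →ₐ[R] B} {r : B} (hfg : ∀ a, SemiconjBy r (g a) (f a))
    (x : C ⊗[R] A) :
    SemiconjBy ((1 : C) ⊗ₜ r) (map (AlgHom.id R C) g x) (map (AlgHom.id R C) f x) := by
  induction x using TensorProduct.induction_on with
  | zero => simpa only [map_zero] using SemiconjBy.zero_right _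
  | tmul c a => simp only [map_tmul, AlgHom.id_apply, SemiconjBy, tmul_mul_tmul, (hfg a).eq,
      one_mul, mul_one]
  | add x y hx hy => simpa only [map_add] using hx.add_right hy

end Algebra.TensorProduct

theorem leg12_eq_assoc_tmul_one (x : H ⊗[k] H) :
    leg12 k H x = Algebra.TensorProduct.assoc k k k H H H (x ⊗ₜ 1) := by
  induction x using TensorProduct.induction_on with
  | zero => simp
  | tmul a b => rfl
  | add x y hx hy => simp only [map_add, hx, hy, TensorProduct.add_tmul]

theorem comulId_comul_eq_idComul_comul (h : H) :
    comulId k H (Bialgebra.comulAlgHom k H h) = idComul k H (Bialgebra.comulAlgHom k H h) :=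
  Coalgebra.coassoc_apply h

theorem stmt9 (Δt : H →ₐ[k] H ⊗[k] H)
    (R R' : H ⊗[k] H)
    (hinv₁ : R * R' = 1)
    (hR₁ : idComul k H R = leg13 k H R * leg12 k H R)
    (hR₂ : ((Algebra.TensorProduct.assoc k k k H H H).toAlgHom.comp
        (Algebra.TensorProduct.map Δt (AlgHom.id k H))) R = leg23 k H R * leg13 k H R)
    (hR₃ : ∀ h : H, Δt h * R = R * Bialgebra.comulAlgHom k H h) :
    ∀ h : H,
      (Algebra.TensorProduct.assoc k k k H H H)
          ((Algebra.TensorProduct.map Δt (AlgHom.id k H)) (Δt h)) =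
        (Algebra.TensorProduct.map (AlgHom.id k H) Δt) (Δt h) := by
  intro h
  set Δ := Bialgebra.comulAlgHom k H
  set assoc := Algebra.TensorProduct.assoc k k k H H H
  have hΔt (x : H) : SemiconjBy R (Δ x) (Δt x) := (hR₃ x).symm
  have hR_reg (φ : H ⊗[k] H →ₐ[k] H ⊗[k] (H ⊗[k] H)) : IsRightRegular (φ R) :=
    isRightRegular_of_mul_eq_one (b := φ R') (by rw [← map_mul, hinv₁, map_one])
  have h₁₂ : SemiconjBy (leg23 k H R * leg13 k H R * leg12 k H R) (comulId k H (Δ h))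
      (assoc (Algebra.TensorProduct.map Δt (AlgHom.id k H) (Δt h))) := by
    rw [← hR₂, leg12_eq_assoc_tmul_one]
    exact ((hΔt h).map (assoc.toAlgHom.comp (Algebra.TensorProduct.map Δt (AlgHom.id k H)))
      ).mul_left ((Algebra.TensorProduct.semiconjBy_tmul_one_map hΔt (Δ h)).map assoc)
  have h₂₃ : SemiconjBy (leg23 k H R * leg13 k H R * leg12 k H R) (idComul k H (Δ h))
      (Algebra.TensorProduct.map (AlgHom.id k H) Δt (Δt h)) := by
    rw [mul_assoc, ← hR₁]
    exact (Algebra.TensorProduct.semiconjBy_one_tmul_map hΔt (Δt h)).mul_left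
      ((hΔt h).map (idComul k H))
  have hT : IsRightRegular (leg23 k H R * leg13 k H R * leg12 k H R) :=
    ((hR_reg _).mul (hR_reg _)).mul (hR_reg _)
  apply hT
  dsimp only
  rw [← h₁₂.eq, ← h₂₃.eq, comulId_comul_eq_idComul_comul]
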